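/- In the non-compliance SCM, the exclusive treatment effect assumption holds: P is conditionally independent of Y given (X, T). -/

import Mathlib

/-!
The conditioning event `{X = x, T = t}` is the intersection of an event in the pair
`(N_P, N_T)` and an event in the triple `(N_U, N_X, N_Y)`, and on it `Y = f_Y(x, t, U, N_Y)`.
So `{P = p}` only adds a condition on the first group and `{Y = y}` only one on the second.
Since the joint law of the two groups is a product, the probability of every such
"rectangle" event factors, and the cross-multiplied form of conditional independence
becomes an identity between products of the four factors.
-/

open Classical Finset

/-- Probability of an event in a finite probability space given by a mass function. -/
noncomputable def Pr {Ω : Type*} [Fintype Ω] (pr : Ω → ℝ) (A : Ω → Prop) : ℝ :=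
  ∑ ω, if A ω then pr ω else 0

/-- Conditional probability `P(A | B)`. -/
noncomputable def cPr {Ω : Type*} [Fintype Ω] (pr : Ω → ℝ) (A B : Ω → Prop) : ℝ :=
  Pr pr (fun ω => A ω ∧ B ω) / Pr pr B

section FiniteProbability

variable {Ω α β : Type*} [Fintype Ω] (pr : Ω → ℝ)

lemma Pr_congr {A B : Ω → Prop} (h : ∀ ω, A ω ↔ B ω) : Pr pr A = Pr pr B := by
  simp only [Pr, h]

lemma Pr_comp_eq_sum (V : Ω → α) (s : Finset α) (hs : ∀ ω, V ω ∈ s) (A : α → Prop) :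
    Pr pr (fun ω => A (V ω)) = ∑ a ∈ s, if A a then Pr pr (fun ω => V ω = a) else 0 := by
  unfold Pr
  calc (∑ ω, if A (V ω) then pr ω else 0)
      = ∑ ω, ∑ a ∈ s, if V ω = a then (if A a then pr ω else 0) else 0 := by
        simp only [Finset.sum_ite_eq, hs, if_true]
    _ = ∑ a ∈ s, ∑ ω, if V ω = a then (if A a then pr ω else 0) else 0 := Finset.sum_comm
    _ = _ := by
        refine Finset.sum_congr rfl fun a _ => ?_
        split_ifs <;> simp

lemma Pr_and_eq_mul_of_Pr_eq_mul (V : Ω → α) (W : Ω → β) (μ : α → ℝ) (ν : β → ℝ)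
    (hVW : ∀ a b, Pr pr (fun ω => V ω = a ∧ W ω = b) = μ a * ν b) (A : α → Prop) (B : β → Prop) :
    Pr pr (fun ω => A (V ω) ∧ B (W ω))
      = (∑ a ∈ univ.image V, if A a then μ a else 0)
        * ∑ b ∈ univ.image W, if B b then ν b else 0 := by
  rw [Pr_comp_eq_sum pr (fun ω => (V ω, W ω)) (univ.image V ×ˢ univ.image W) (by simp)
    (fun c => A c.1 ∧ B c.2), Finset.sum_product, Finset.sum_mul_sum]
  refine Finset.sum_congr rfl fun a _ => Finset.sum_congr rfl fun b _ => ?_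
  simp only [Prod.mk.injEq, hVW, ite_and, ite_mul, mul_ite, zero_mul, mul_zero]
  split_ifs <;> rfl

lemma Pr_and_mul_Pr_and_swap (V : Ω → α) (W : Ω → β) (μ : α → ℝ) (ν : β → ℝ)
    (hVW : ∀ a b, Pr pr (fun ω => V ω = a ∧ W ω = b) = μ a * ν b) (A A' : α → Prop)
    (B B' : β → Prop) :
    Pr pr (fun ω => A (V ω) ∧ B (W ω)) * Pr pr (fun ω => A' (V ω) ∧ B' (W ω))
      = Pr pr (fun ω => A (V ω) ∧ B' (W ω)) * Pr pr (fun ω => A' (V ω) ∧ B (W ω)) := by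
  simp only [Pr_and_eq_mul_of_Pr_eq_mul pr V W μ ν hVW]
  ring

-- No positivity is needed: when `Pr pr C = 0` both sides are `0`, since `x / 0 = 0`.
lemma cPr_and_eq_mul_of_Pr_mul_eq {E F C : Ω → Prop}
    (h : Pr pr (fun ω => (E ω ∧ F ω) ∧ C ω) * Pr pr C
      = Pr pr (fun ω => E ω ∧ C ω) * Pr pr (fun ω => F ω ∧ C ω)) :
    cPr pr (fun ω => E ω ∧ F ω) C = cPr pr E C * cPr pr F C := by
  unfold cPr
  rcases eq_or_ne (Pr pr C) 0 with hC | hC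
  · simp [hC]
  · rw [div_mul_div_comm, div_eq_div_iff hC (mul_ne_zero hC hC), ← h]
    ring

end FiniteProbability

theorem stmt3_general
    {Ω 𝒰 𝒳 NXt NTt NYt : Type*} [Fintype Ω]
    (pr : Ω → ℝ)
    (NP : Ω → Bool) (NU : Ω → 𝒰) (NXn : Ω → NXt) (NTn : Ω → NTt) (NYn : Ω → NYt)
    (fX : 𝒰 → NXt → 𝒳) (fT : 𝒳 → NTt → Bool) (fY : 𝒳 → Bool → 𝒰 → NYt → Bool)
    (P : Ω → Bool) (hP : P = NP)
    (U : Ω → 𝒰) (hU : U = NU)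
    (X : Ω → 𝒳) (hX : X = fun ω => fX (U ω) (NXn ω))
    (T : Ω → Bool) (hT : T = fun ω => fT (X ω) (NTn ω) && P ω)
    (Y : Ω → Bool) (hY : Y = fun ω => fY (X ω) (T ω) (U ω) (NYn ω))
    (hindep : ∀ (a : Bool) (u : 𝒰) (nx : NXt) (nt : NTt) (ny : NYt),
      Pr pr (fun ω => NP ω = a ∧ NU ω = u ∧ NXn ω = nx ∧ NTn ω = nt ∧ NYn ω = ny)
        = Pr pr (fun ω => NP ω = a) * Pr pr (fun ω => NU ω = u)
          * Pr pr (fun ω => NXn ω = nx) * Pr pr (fun ω => NTn ω = nt)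
          * Pr pr (fun ω => NYn ω = ny)) :
    ∀ (p y : Bool) (x : 𝒳) (t : Bool),
      0 < Pr pr (fun ω => X ω = x ∧ T ω = t) →
      cPr pr (fun ω => P ω = p ∧ Y ω = y) (fun ω => X ω = x ∧ T ω = t)
        = cPr pr (fun ω => P ω = p) (fun ω => X ω = x ∧ T ω = t)
          * cPr pr (fun ω => Y ω = y) (fun ω => X ω = x ∧ T ω = t) := by
  intro p y x t _
  subst hP hU hX hT hY
  have hVW : ∀ v w, Pr pr (fun ω => (P ω, NTn ω) = v ∧ (U ω, NXn ω, NYn ω) = w)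
      = (Pr pr (fun ω => P ω = v.1) * Pr pr (fun ω => NTn ω = v.2))
        * (Pr pr (fun ω => U ω = w.1) * Pr pr (fun ω => NXn ω = w.2.1)
          * Pr pr (fun ω => NYn ω = w.2.2)) := by
    rintro ⟨a, nt⟩ ⟨u, nx, ny⟩
    convert hindep a u nx nt ny using 1
    · exact Pr_congr pr fun ω => by simp only [Prod.mk.injEq]; tauto
    · ring
  apply cPr_and_eq_mul_of_Pr_mul_eq
  convert Pr_and_mul_Pr_and_swap pr _ _ _ _ hVW
    (fun v => v.1 = p ∧ (fT x v.2 && v.1) = t) (fun v => (fT x v.2 && v.1) = t)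
    (fun w => fX w.1 w.2.1 = x ∧ fY x t w.1 w.2.2 = y) (fun w => fX w.1 w.2.1 = x) using 2 <;>
  exact Pr_congr pr fun ω => by grind

/-- Exclusive treatment effect: in the non-compliance SCM,
P is conditionally independent of Y given (X, T), whenever the conditioning
event has positive probability. -/
theorem stmt3
    {Ω 𝒰 𝒳 NXt NTt NYt : Type*} [Fintype Ω]
    (pr : Ω → ℝ) (hpr : ∀ ω, 0 ≤ pr ω) (hsum : ∑ ω, pr ω = 1)
    (NP : Ω → Bool) (NU : Ω → 𝒰) (NXn : Ω → NXt) (NTn : Ω → NTt) (NYn : Ω → NYt)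
    (fX : 𝒰 → NXt → 𝒳) (fT : 𝒳 → NTt → Bool) (fY : 𝒳 → Bool → 𝒰 → NYt → Bool)
    (P : Ω → Bool) (hP : P = NP)
    (U : Ω → 𝒰) (hU : U = NU)
    (X : Ω → 𝒳) (hX : X = fun ω => fX (U ω) (NXn ω))
    (T : Ω → Bool) (hT : T = fun ω => fT (X ω) (NTn ω) && P ω)
    (Y : Ω → Bool) (hY : Y = fun ω => fY (X ω) (T ω) (U ω) (NYn ω))
    (hindep : ∀ (a : Bool) (u : 𝒰) (nx : NXt) (nt : NTt) (ny : NYt),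
      Pr pr (fun ω => NP ω = a ∧ NU ω = u ∧ NXn ω = nx ∧ NTn ω = nt ∧ NYn ω = ny)
        = Pr pr (fun ω => NP ω = a) * Pr pr (fun ω => NU ω = u)
          * Pr pr (fun ω => NXn ω = nx) * Pr pr (fun ω => NTn ω = nt)
          * Pr pr (fun ω => NYn ω = ny)) :
    ∀ (p y : Bool) (x : 𝒳) (t : Bool),
      0 < Pr pr (fun ω => X ω = x ∧ T ω = t) →
      cPr pr (fun ω => P ω = p ∧ Y ω = y) (fun ω => X ω = x ∧ T ω = t)
        = cPr pr (fun ω => P ω = p) (fun ω => X ω = x ∧ T ω = t)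
          * cPr pr (fun ω => Y ω = y) (fun ω => X ω = x ∧ T ω = t) :=
  stmt3_general pr NP NU NXn NTn NYn fX fT fY P hP U hU X hX T hT Y hY hindep
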